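/- Edge count identity: for every finite simple graph G, tr(|H|²) = 4·|E'|, where |E'| is the number of edges of the connection graph G'. -/

import Mathlib

open Matrix

variable {V : Type*} [Fintype V] [DecidableEq V]

/-- The simplices of the 1-dimensional simplicial complex of a graph: vertices and edges. -/
abbrev Simplex (G : SimpleGraph V) [DecidableRel G.Adj] := V ⊕ G.edgeSet

variable (G : SimpleGraph V) [DecidableRel G.Adj]

/-- The vertex set of a simplex. -/
def sVerts : Simplex G → Set V
  | Sum.inl u => {u}
  | Sum.inr f => {w | w ∈ (f : Sym2 V)}

instance (x : Simplex G) (w : V) : Decidable (w ∈ sVerts G x) :=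
  match x with
  | Sum.inl u => decidable_of_iff (w = u) (by simp [sVerts])
  | Sum.inr f => decidable_of_iff (w ∈ (f : Sym2 V)) (by simp [sVerts])

/-- Two simplices touch if their vertex sets intersect. -/
def touches (x y : Simplex G) : Prop := ∃ w, w ∈ sVerts G x ∧ w ∈ sVerts G y

instance : DecidableRel (touches G) := fun _ _ => Fintype.decidableExistsFintype

/-- The connection Laplacian. -/
def connL : Matrix (Simplex G) (Simplex G) ℤ :=
  Matrix.of fun x y => if touches G x y then 1 else 0

/-- The sign-less incidence matrix. -/
def absd : Matrix (Simplex G) (Simplex G) ℤ :=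
  Matrix.of fun a b =>
    match a, b with
    | Sum.inr f, Sum.inl u => if u ∈ (f : Sym2 V) then 1 else 0
    | _, _ => 0

/-- The sign-less Hodge Laplacian. -/
def absH : Matrix (Simplex G) (Simplex G) ℤ := (absd G + (absd G)ᵀ) ^ 2

/-- The connection graph `G'`: two distinct simplices are adjacent iff their
vertex sets intersect. -/
def connGraph : SimpleGraph (Simplex G) where
  Adj x y := x ≠ y ∧ touches G x y
  symm := by
    constructor
    rintro x y ⟨hxy, w, h1, h2⟩
    exact ⟨Ne.symm hxy, w, h2, h1⟩
  loopless := ⟨fun x h => h.1 rfl⟩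

instance : DecidableRel (connGraph G).Adj :=
  fun x y => inferInstanceAs (Decidable (x ≠ y ∧ touches G x y))

/-!
In block form over `V ⊕ E`, `|d| + |d|ᵀ = [[0, N], [Nᵀ, 0]]` with `N` the vertex-edge incidence
matrix, so `|H|² = (|d| + |d|ᵀ)⁴` has trace `2 tr((NᵀN)²)` by cyclicity of the trace. Two
distinct edges share at most one endpoint, so `NᵀN = 2I + A_L` with `A_L` the adjacency matrix
of the line graph `L(G)`, and this trace is `2 (4e + 2|E(L)|)`. On the other side the adjacency
matrix of `G'` is `[[0, N], [Nᵀ, A_L]]`, and `2|E'| = tr(A_{G'}²) = 2 tr(NᵀN) + tr(A_L²)`,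
which is `4e + 2|E(L)|`.
-/

open Finset

namespace Matrix

variable {m n R : Type*} [Fintype m] [Fintype n]

theorem trace_fromBlocks [AddCommMonoid R] (A : Matrix m m R) (B : Matrix m n R)
    (C : Matrix n m R) (D : Matrix n n R) :
    trace (fromBlocks A B C D) = trace A + trace D := by
  simp [trace, Fintype.sum_sum_type]

variable [DecidableEq m] [DecidableEq n]

theorem fromBlocks_zero_sq [Semiring R] (B : Matrix m n R) (C : Matrix n m R)
    (D : Matrix n n R) :
    fromBlocks 0 B C D ^ 2 = fromBlocks (B * C) (B * D) (D * C) (C * B + D ^ 2) := by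
  simp [sq, fromBlocks_multiply]

theorem trace_fromBlocks_zero_pow_four [CommSemiring R] (B : Matrix m n R) (C : Matrix n m R) :
    trace (fromBlocks 0 B C 0 ^ 4) = 2 * trace ((C * B) ^ 2) := by
  have hBC : trace (B * C * (B * C)) = trace (C * B * (C * B)) := by
    rw [Matrix.mul_assoc, trace_mul_comm]
    simp only [Matrix.mul_assoc]
  rw [show 4 = 2 * 2 from rfl, pow_mul, fromBlocks_zero_sq]
  simp [sq, fromBlocks_multiply, trace_fromBlocks, hBC, two_mul]

end Matrix

namespace Sym2

variable {α : Type*} [Fintype α] [DecidableEq α]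

theorem card_filter_mem_of_not_isDiag {z : Sym2 α} (hz : ¬z.IsDiag) : #{u | u ∈ z} = 2 := by
  rw [← card_toFinset_of_not_isDiag z hz]
  congr 1
  ext u
  simp

theorem card_filter_mem_and_mem_le_one {z w : Sym2 α} (hzw : z ≠ w) :
    #{u | u ∈ z ∧ u ∈ w} ≤ 1 := by
  refine card_le_one.mpr fun a ha b hb => by_contra fun hab => hzw ?_
  simp only [mem_filter, mem_univ, true_and] at ha hb
  exact ((mem_and_mem_iff hab).mp ⟨ha.1, hb.1⟩).trans ((mem_and_mem_iff hab).mp ⟨ha.2, hb.2⟩).symm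

end Sym2

theorem SimpleGraph.trace_adjMatrix_sq {W R : Type*} [Fintype W] [DecidableEq W] [Semiring R]
    (H : SimpleGraph W) [DecidableRel H.Adj] :
    trace (H.adjMatrix R ^ 2) = 2 * (#H.edgeFinset : R) := by
  simp only [sq, trace, diag_apply, adjMatrix_mul_self_apply_self]
  rw [← Nat.cast_sum, H.sum_degrees_eq_twice_card_edges]
  norm_cast

open SimpleGraph

instance : DecidableRel G.lineGraph.Adj := fun _ _ =>
  decidable_of_iff _ lineGraph_adj_iff_exists.symm

def edgeIncMatrix : Matrix V G.edgeSet ℤ := of fun u f => if u ∈ (f : Sym2 V) then 1 else 0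

omit [Fintype V] in
theorem absd_add_transpose_eq_fromBlocks :
    absd G + (absd G)ᵀ = fromBlocks 0 (edgeIncMatrix G) (edgeIncMatrix G)ᵀ 0 := by
  ext (u | f) (w | g) <;> simp [absd, edgeIncMatrix]

theorem adjMatrix_connGraph : (connGraph G).adjMatrix ℤ =
    fromBlocks 0 (edgeIncMatrix G) (edgeIncMatrix G)ᵀ (G.lineGraph.adjMatrix ℤ) := by
  ext (u | f) (w | g) <;> simp only [adjMatrix_apply] <;>
    simp [connGraph, touches, sVerts, edgeIncMatrix, lineGraph_adj_iff_exists]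

omit [DecidableRel G.Adj] in
theorem transpose_edgeIncMatrix_mul_edgeIncMatrix_apply (f g : G.edgeSet) :
    ((edgeIncMatrix G)ᵀ * edgeIncMatrix G) f g = #{u | u ∈ (f : Sym2 V) ∧ u ∈ (g : Sym2 V)} := by
  simp only [mul_apply, transpose_apply, edgeIncMatrix, of_apply, ite_zero_mul_ite_zero, mul_one,
    sum_boole]

omit [DecidableRel G.Adj] in
theorem transpose_edgeIncMatrix_mul_edgeIncMatrix :
    (edgeIncMatrix G)ᵀ * edgeIncMatrix G = 2 + G.lineGraph.adjMatrix ℤ := by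
  ext f g
  rw [transpose_edgeIncMatrix_mul_edgeIncMatrix_apply]
  obtain rfl | hfg := eq_or_ne f g
  · simp [Sym2.card_filter_mem_of_not_isDiag (G.not_isDiag_of_mem_edgeSet f.2), ofNat_apply]
  · have hle := Sym2.card_filter_mem_and_mem_le_one (Subtype.coe_ne_coe.mpr hfg)
    simp only [Matrix.add_apply, ofNat_apply, hfg, if_false, adjMatrix_apply,
      lineGraph_adj_iff_exists, ne_eq, not_false_eq_true, true_and]
    split_ifs with hcommon
    · obtain ⟨u, hf, hg⟩ := hcommon
      have : 0 < #{u | u ∈ (f : Sym2 V) ∧ u ∈ (g : Sym2 V)} := card_pos.mpr ⟨u, by simp [hf, hg]⟩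
      omega
    · simpa [filter_eq_empty_iff] using hcommon

theorem trace_transpose_edgeIncMatrix_mul_edgeIncMatrix :
    trace ((edgeIncMatrix G)ᵀ * edgeIncMatrix G) = 2 * (#G.edgeFinset : ℤ) := by
  simp [transpose_edgeIncMatrix_mul_edgeIncMatrix, edgeFinset_card, trace, ofNat_apply, mul_comm]

theorem trace_transpose_edgeIncMatrix_mul_edgeIncMatrix_sq :
    trace (((edgeIncMatrix G)ᵀ * edgeIncMatrix G) ^ 2) =
      4 * (#G.edgeFinset : ℤ) + 2 * #G.lineGraph.edgeFinset := by
  rw [transpose_edgeIncMatrix_mul_edgeIncMatrix,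
    (Commute.ofNat_left 2 (G.lineGraph.adjMatrix ℤ)).add_sq, trace_add, trace_add,
    trace_adjMatrix_sq]
  simp [sq, two_mul, add_mul, trace, ofNat_apply, edgeFinset_card, mul_comm]

theorem card_edgeFinset_connGraph :
    #(connGraph G).edgeFinset = 2 * #G.edgeFinset + #G.lineGraph.edgeFinset := by
  have h := trace_adjMatrix_sq (R := ℤ) (connGraph G)
  rw [adjMatrix_connGraph, fromBlocks_zero_sq, trace_fromBlocks, trace_add, trace_mul_comm,
    trace_transpose_edgeIncMatrix_mul_edgeIncMatrix, trace_adjMatrix_sq] at h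
  omega

theorem trace_absH_sq :
    trace (absH G ^ 2) = 8 * (#G.edgeFinset : ℤ) + 4 * #G.lineGraph.edgeFinset := by
  rw [absH, ← pow_mul, absd_add_transpose_eq_fromBlocks, trace_fromBlocks_zero_pow_four,
    trace_transpose_edgeIncMatrix_mul_edgeIncMatrix_sq]
  ring

/-- Edge count identity: `tr(|H|²) = 4 |E'|`, where `|E'|` is the number of edges of the
connection graph `G'`. -/
theorem trace_eq_four_edges :
    Matrix.trace (absH G ^ 2) = 4 * ((connGraph G).edgeFinset.card : ℤ) := by
  rw [trace_absH_sq, card_edgeFinset_connGraph]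
  push_cast
  ring
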